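/- Let q be a complex number with 0 < |q| < 1. Define Θ_0(w) = ∑_{l ∈ Z} q^{l^2} w^l and Θ_{1/2}(w) = ∑_{l ∈ Z} q^{(l+1/2)^2} w^{l+1/2} for w in a fixed branch (equivalently, as functions of ζ with w = e^{2πiζ}). Then Θ_0 and Θ_{1/2} have no common zero: for every nonzero complex number w (choice of square root fixed), Θ_0(w) and Θ_{1/2}(w) do not both vanish. -/

import Mathlib

set_option maxHeartbeats 1000000
set_option linter.unusedVariables false

noncomputable section ThetaNCZ

open Filter


noncomputable section ThetaNCZ

open Filter

/-- The full theta series `∑ p^(n²) tⁿ` over `n : ℤ`. -/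
def Th (p t : ℂ) : ℂ := ∑' n : ℤ, p ^ (n ^ 2) * t ^ n

lemma thSummableR {ρ σ : ℝ} (h0 : 0 < ρ) (h1 : ρ < 1) (hσ : 0 < σ) :
    Summable fun n : ℕ => ρ ^ (n ^ 2) * σ ^ n := by
  apply summable_of_ratio_test_tendsto_lt_one (l := 0) one_pos
  · exact Eventually.of_forall fun n => by positivity
  · have key : ∀ n : ℕ, ‖ρ ^ ((n+1) ^ 2) * σ ^ (n+1)‖ / ‖ρ ^ (n ^ 2) * σ ^ n‖
        = (ρ * σ) * (ρ ^ 2) ^ n := by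
      intro n
      rw [Real.norm_eq_abs, Real.norm_eq_abs, abs_of_pos (by positivity),
        abs_of_pos (by positivity)]
      rw [show (n+1)^2 = n^2 + (2*n+1) by ring, pow_add, pow_succ]
      field_simp
      ring
    simp only [key]
    simpa using (tendsto_pow_atTop_nhds_zero_of_lt_one (by positivity)
      (by nlinarith)).const_mul (ρ * σ)

lemma thSummableNorm {p t : ℂ} (hp0 : p ≠ 0) (hp1 : ‖p‖ < 1) (ht : t ≠ 0) :
    Summable fun n : ℤ => ‖p ^ (n ^ 2) * t ^ n‖ := by
  have hρ0 : 0 < ‖p‖ := norm_pos_iff.mpr hp0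
  have hσ0 : 0 < ‖t‖ := norm_pos_iff.mpr ht
  apply Summable.of_nat_of_neg_add_one
  · apply (thSummableR hρ0 hp1 hσ0).congr
    intro n
    rw [norm_mul, norm_zpow, norm_zpow]
    rw [show ((n : ℤ))^2 = ((n^2 : ℕ) : ℤ) by push_cast; ring, zpow_natCast, zpow_natCast]
  · have : Summable fun n : ℕ => ‖p‖ ^ ((n+1) ^ 2) * ‖t‖⁻¹ ^ (n+1) :=
      (summable_nat_add_iff 1).mpr (thSummableR hρ0 hp1 (by positivity))
    apply this.congr
    intro n
    rw [norm_mul, norm_zpow, norm_zpow]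
    rw [show ((-((n:ℤ)+1)))^2 = (((n+1)^2 : ℕ) : ℤ) by push_cast; ring, zpow_natCast]
    rw [show (-((n:ℤ)+1)) = -(((n+1) : ℕ) : ℤ) by push_cast; ring]
    rw [zpow_neg, zpow_natCast, ← inv_pow]

lemma thSummable {p t : ℂ} (hp0 : p ≠ 0) (hp1 : ‖p‖ < 1) (ht : t ≠ 0) :
    Summable fun n : ℤ => p ^ (n ^ 2) * t ^ n :=
  summable_norm_iff.mp (thSummableNorm hp0 hp1 ht)


variable {p t : ℂ}

lemma neg_one_zpow_inv (n : ℤ) : ((-1 : ℂ) ^ n)⁻¹ = (-1) ^ n := by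
  rcases Int.even_or_odd n with h | h
  · rw [h.neg_one_zpow]; norm_num
  · rw [h.neg_one_zpow]; norm_num

lemma neg_zpow' (t : ℂ) (n : ℤ) : (-t) ^ n = (-1) ^ n * t ^ n := by
  rw [← neg_one_mul, mul_zpow]

lemma neg_one_zpow_sub (m n : ℤ) : (-1 : ℂ) ^ (m - n) = (-1) ^ m * (-1) ^ n := by
  rw [zpow_sub₀ (by norm_num : (-1:ℂ) ≠ 0), div_eq_mul_inv, neg_one_zpow_inv]

lemma th_shift_key {p t : ℂ} (hp0 : p ≠ 0) (ht : t ≠ 0) (k n : ℤ) :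
    p ^ (n^2) * (p ^ (2*k) * t) ^ n
      = p ^ (-(k^2)) * t ^ (-k) * (p ^ ((n+k)^2) * t ^ (n+k)) := by
  rw [mul_zpow, ← zpow_mul, show 2*k*n = 2*k*n from rfl]
  rw [show (n+k)^2 = n^2 + 2*k*n + k^2 by ring, show n + k = n + k from rfl]
  rw [zpow_add₀ hp0 (n^2 + 2*k*n) (k^2), zpow_add₀ hp0 (n^2) (2*k*n),
    zpow_add₀ ht n k, zpow_neg, zpow_neg]
  have h1 : p ^ (k^2) ≠ 0 := zpow_ne_zero _ hp0
  have h2 : t ^ (k:ℤ) ≠ 0 := zpow_ne_zero _ ht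
  field_simp

lemma th_shift (hp0 : p ≠ 0) (ht : t ≠ 0) (k : ℤ) :
    Th p (p ^ (2*k) * t) = p ^ (-(k^2)) * t ^ (-k) * Th p t := by
  unfold Th
  rw [← tsum_mul_left]
  rw [← Equiv.tsum_eq (Equiv.addRight k) (fun n : ℤ => p ^ (-(k^2)) * t ^ (-k) * (p ^ (n^2) * t ^ n))]
  exact tsum_congr fun n => by
    simpa using th_shift_key hp0 ht k n

lemma th_zero_shift (hp0 : p ≠ 0) (ht : t ≠ 0) (k : ℤ) (h : Th p t = 0) :
    Th p (p ^ (2*k) * t) = 0 := by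
  rw [th_shift hp0 ht k, h, mul_zero]

lemma th_zero_orbit {q w : ℂ} (hq0 : q ≠ 0) (hw : w ≠ 0) (h1 : Th q w = 0)
    (h2 : Th q (q * w) = 0) (j : ℤ) : Th q (q ^ j * w) = 0 := by
  rcases Int.even_or_odd j with ⟨k, hk⟩ | ⟨k, hk⟩
  · have := th_zero_shift hq0 hw k h1
    rwa [show (2*k) = j by omega] at this
  · have := th_zero_shift hq0 (mul_ne_zero hq0 hw) k h2
    rwa [show q ^ (2*k) * (q * w) = q ^ j * w by
      rw [hk, zpow_add₀ hq0, zpow_one]; ring] at this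


variable {p t : ℂ}


def shear : (ℤ × ℤ) ≃ (ℤ × ℤ) where
  toFun z := (z.1 - z.2, z.2)
  invFun z := (z.1 + z.2, z.2)
  left_inv z := by simp
  right_inv z := by simp

lemma oddKey (hp0 : p ≠ 0) (ht : t ≠ 0) {k : ℤ} (hk : Odd k) (n : ℤ) :
    (p^((k-(k-n))^2) * t^(k-(k-n))) * (p^((k-n)^2) * (-t)^(k-n))
      = -((p^((k-n)^2) * t^(k-n)) * (p^(n^2) * (-t)^n)) := by
  rw [sub_sub_cancel, neg_zpow' t (k-n), neg_zpow' t n, neg_one_zpow_sub k n, hk.neg_one_zpow]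
  ring

lemma evenKey (hp0 : p ≠ 0) (ht : t ≠ 0) (α β : ℤ) :
    (p^((α+β)^2) * t^(α+β)) * (p^((α-β)^2) * (-t)^(α-β))
      = ((p^2)^(α^2) * (-(t^2))^α) * ((p^2)^(β^2) * (-1)^β) := by
  have hp2 : (p^2 : ℂ) = p^((2:ℕ):ℤ) := by rw [zpow_natCast]
  have ht2 : (t^2 : ℂ) = t^((2:ℕ):ℤ) := by rw [zpow_natCast]
  rw [neg_zpow' t (α-β), neg_one_zpow_sub α β, neg_zpow' (t^2) α, hp2, ht2,
    ← zpow_mul p, ← zpow_mul p, ← zpow_mul t]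
  push_cast
  rw [show (α+β)^2 = α^2+β^2+2*(α*β) by ring, zpow_add₀ hp0, zpow_add₀ hp0]
  rw [show (α-β)^2 = (α^2+β^2)-2*(α*β) by ring, zpow_sub₀ hp0, zpow_add₀ hp0, zpow_sub₀ ht α β]
  rw [show (2:ℤ)*α^2 = α^2+α^2 by ring, zpow_add₀ hp0]
  rw [show (2:ℤ)*β^2 = β^2+β^2 by ring, zpow_add₀ hp0]
  rw [show (2:ℤ)*α = α+α by ring, zpow_add₀ ht, zpow_add₀ ht]
  have h1 : p ^ (2*(α*β)) ≠ 0 := zpow_ne_zero _ hp0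
  have h2 : t ^ (β:ℤ) ≠ 0 := zpow_ne_zero _ ht
  field_simp

lemma innerOdd (hp0 : p ≠ 0) (ht : t ≠ 0) {k : ℤ} (hk : Odd k) :
    ∑' n : ℤ, (p^((k-n)^2) * t^(k-n)) * (p^(n^2) * (-t)^n) = 0 := by
  set W : ℤ → ℂ := fun n => (p^((k-n)^2) * t^(k-n)) * (p^(n^2) * (-t)^n) with hW
  have h1 : ∑' n, W ((Equiv.subLeft k) n) = ∑' n, W n := Equiv.tsum_eq _ _
  have h2 : ∀ n, W ((Equiv.subLeft k) n) = - W n := by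
    intro n
    simp only [Equiv.subLeft_apply, hW]
    exact oddKey hp0 ht hk n
  rw [tsum_congr h2, tsum_neg] at h1
  exact add_self_eq_zero.mp (by linear_combination -h1)

lemma innerEven (hp0 : p ≠ 0) (ht : t ≠ 0) (α : ℤ) :
    ∑' n : ℤ, (p^((2*α-n)^2) * t^(2*α-n)) * (p^(n^2) * (-t)^n)
      = ((p^2)^(α^2) * (-(t^2))^α) * Th (p^2) (-1) := by
  rw [Th, ← tsum_mul_left]
  rw [← Equiv.tsum_eq (Equiv.subLeft α)
    (fun n => (p^((2*α-n)^2) * t^(2*α-n)) * (p^(n^2) * (-t)^n))]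
  refine tsum_congr fun β => ?_
  simp only [Equiv.subLeft_apply]
  rw [show 2*α - (α - β) = α + β by ring]
  rw [evenKey hp0 ht α β]

lemma th_star (hp0 : p ≠ 0) (hp1 : ‖p‖ < 1) (ht : t ≠ 0)
    (hsn : ∀ u : ℂ, u ≠ 0 → Summable fun n : ℤ => ‖p ^ (n ^ 2) * u ^ n‖) :
    Th p t * Th p (-t) = Th (p^2) (-(t^2)) * Th (p^2) (-1) := by
  have h1 := hsn t ht
  have h2 := hsn (-t) (neg_ne_zero.mpr ht)
  have hF : Summable fun z : ℤ × ℤ => (p^(z.1^2)*t^z.1) * (p^(z.2^2)*(-t)^z.2) :=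
    summable_mul_of_summable_norm (f := fun n : ℤ => p ^ (n^2) * t ^ n)
      (g := fun n : ℤ => p ^ (n^2) * (-t) ^ n) h1 h2
  have e1 : Th p t * Th p (-t) = ∑' z : ℤ × ℤ, (p^(z.1^2)*t^z.1) * (p^(z.2^2)*(-t)^z.2) :=
    tsum_mul_tsum_of_summable_norm (f := fun n : ℤ => p ^ (n^2) * t ^ n)
      (g := fun n : ℤ => p ^ (n^2) * (-t) ^ n) h1 h2
  have e2 : ∑' z : ℤ × ℤ, (p^((z.1-z.2)^2)*t^(z.1-z.2)) * (p^(z.2^2)*(-t)^z.2)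
      = ∑' z : ℤ × ℤ, (p^(z.1^2)*t^z.1) * (p^(z.2^2)*(-t)^z.2) := by
    exact Equiv.tsum_eq shear (fun z : ℤ × ℤ => (p^(z.1^2)*t^z.1) * (p^(z.2^2)*(-t)^z.2))
  have hG : Summable fun z : ℤ × ℤ => (p^((z.1-z.2)^2)*t^(z.1-z.2)) * (p^(z.2^2)*(-t)^z.2) :=
    shear.summable_iff.mpr hF
  have e3 := Summable.tsum_prod hG
  set I : ℤ → ℂ := fun k => ∑' n : ℤ, (p^((k-n)^2)*t^(k-n)) * (p^(n^2)*(-t)^n) with hI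
  have e5 : ∑' α : ℤ, I (2*α) = ∑' k, I k := by
    refine Function.Injective.tsum_eq (g := fun α : ℤ => 2*α) (fun a b h => by dsimp at h; omega) ?_
    intro k hk
    rcases Int.even_or_odd k with ⟨m, hm⟩ | ho
    · exact ⟨m, by dsimp; omega⟩
    · exact absurd (innerOdd hp0 ht ho) hk
  have e6 : ∀ α : ℤ, I (2*α) = ((p^2)^(α^2) * (-(t^2))^α) * Th (p^2) (-1) :=
    fun α => innerEven hp0 ht α
  calc Th p t * Th p (-t)
      = ∑' z : ℤ × ℤ, (p^(z.1^2)*t^z.1) * (p^(z.2^2)*(-t)^z.2) := e1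
    _ = ∑' k, I k := by rw [← e2, e3]
    _ = ∑' α : ℤ, I (2*α) := e5.symm
    _ = ∑' α : ℤ, ((p^2)^(α^2) * (-(t^2))^α) * Th (p^2) (-1) := tsum_congr e6
    _ = (∑' α : ℤ, (p^2)^(α^2) * (-(t^2))^α) * Th (p^2) (-1) := tsum_mul_right
    _ = Th (p^2) (-(t^2)) * Th (p^2) (-1) := rfl


lemma geom_ite {ρ : ℝ} (h0 : 0 ≤ ρ) (h1 : ρ < 1) :
    Summable (fun n : ℕ => if n = 0 then (0:ℝ) else ρ ^ n)
    ∧ ∑' n : ℕ, (if n = 0 then (0:ℝ) else ρ ^ n) = ρ / (1 - ρ) := by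
  have hg : Summable fun n : ℕ => ρ ^ n := summable_geometric_of_lt_one h0 h1
  have hs : Summable (fun n : ℕ => if n = 0 then (0:ℝ) else ρ ^ n) := by
    apply hg.of_nonneg_of_le (fun n => by positivity)
    intro n; split <;> [positivity; exact le_refl _]
  refine ⟨hs, ?_⟩
  have := Summable.tsum_eq_add_tsum_ite hg 0
  rw [tsum_geometric_of_lt_one h0 h1, pow_zero] at this
  have h2 : ∑' n : ℕ, (if n = 0 then (0:ℝ) else ρ ^ n) = (1-ρ)⁻¹ - 1 := by
    linarith
  rw [h2]
  have hne : 1 - ρ ≠ 0 := by linarith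
  field_simp
  ring
lemma vS {ρ : ℝ} (h0 : 0 ≤ ρ) (h1 : ρ < 1) :
    Summable (fun n : ℤ => if n = 0 then (0:ℝ) else ρ ^ n.natAbs)
    ∧ ∑' n : ℤ, (if n = 0 then (0:ℝ) else ρ ^ n.natAbs) = 2 * ρ / (1 - ρ) := by
  set v : ℤ → ℝ := fun n => if n = 0 then (0:ℝ) else ρ ^ n.natAbs with hv
  have hg : Summable fun n : ℕ => ρ ^ n := summable_geometric_of_lt_one h0 h1
  have hnat : ∀ n : ℕ, v (n : ℤ) = if n = 0 then (0:ℝ) else ρ ^ n := by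
    intro n
    simp only [hv, Int.natCast_eq_zero, Int.natAbs_natCast]
  have hneg : ∀ n : ℕ, v (-((n:ℤ) + 1)) = ρ ^ (n + 1) := by
    intro n
    have h1 : (-((n:ℤ) + 1)) ≠ 0 := by omega
    have h2 : (-((n:ℤ) + 1)).natAbs = n + 1 := by omega
    simp only [hv, h1, if_false, h2]
  have hsneg : Summable fun n : ℕ => v (-((n:ℤ) + 1)) := by
    apply Summable.congr ((summable_nat_add_iff 1).mpr hg)
    intro n; rw [hneg n]
  have hsnat : Summable fun n : ℕ => v (n : ℤ) := by
    apply Summable.congr (geom_ite h0 h1).1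
    intro n; rw [hnat n]
  have hvs : Summable v := Summable.of_nat_of_neg_add_one hsnat hsneg
  refine ⟨hvs, ?_⟩
  have key := tsum_nat_add_neg_add_one hvs
  rw [Summable.tsum_add hsnat hsneg] at key
  rw [← key, tsum_congr hnat, tsum_congr hneg, (geom_ite h0 h1).2]
  have : ∑' n : ℕ, ρ ^ (n+1) = ρ / (1-ρ) := by
    have : ∀ n : ℕ, ρ ^ (n+1) = ρ * ρ ^ n := fun n => by rw [pow_succ]; ring
    rw [tsum_congr this, tsum_mul_left, tsum_geometric_of_lt_one h0 h1]
    field_simp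
  rw [this]
  ring

lemma th_est {p t : ℂ} (hp0 : p ≠ 0) (hp1 : ‖p‖ < 1) (ht : t ≠ 0) (b : ℤ) (hb : b ≠ 0)
    (hsum : Summable fun n : ℤ => p ^ (n ^ 2) * t ^ n)
    (hbound : ∀ n : ℤ, n ≠ 0 → n ≠ b → ‖p ^ (n^2) * t ^ n‖ ≤ ‖p‖ ^ n.natAbs) :
    ‖Th p t - 1 - p ^ (b^2) * t ^ b‖ ≤ 2 * ‖p‖ / (1 - ‖p‖) := by
  set f : ℤ → ℂ := fun n => p ^ (n ^ 2) * t ^ n with hf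
  have hρ0 : (0:ℝ) ≤ ‖p‖ := norm_nonneg p
  set g : ℤ → ℂ := fun n => if n = 0 then 0 else f n with hg
  have hgu : g = Function.update f 0 0 := by
    ext n; rw [Function.update_apply]
  have hgs : Summable g := hgu ▸ hsum.update 0 0
  set h : ℤ → ℂ := fun n => if n = b then 0 else g n with hh
  have hhu : h = Function.update g b 0 := by
    ext n; rw [Function.update_apply]
  have hhs : Summable h := hhu ▸ hgs.update b 0
  have e0 : Th p t = f 0 + ∑' n, g n := Summable.tsum_eq_add_tsum_ite hsum 0
  have e1 : (∑' n, g n) = g b + ∑' n, h n := Summable.tsum_eq_add_tsum_ite hgs b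
  have hf0 : f 0 = 1 := by simp [hf]
  have hgb : g b = f b := by simp [hg, hb]
  have hTh : Th p t - 1 - p ^ (b^2) * t ^ b = ∑' n, h n := by
    rw [e0, e1, hf0, hgb]; simp [hf]
  rw [hTh]
  have hvs := vS hρ0 hp1
  have hhn : Summable fun n => ‖h n‖ := summable_norm_iff.mpr hhs
  calc ‖∑' n, h n‖ ≤ ∑' n, ‖h n‖ := norm_tsum_le_tsum_norm hhn
    _ ≤ ∑' n : ℤ, (if n = 0 then (0:ℝ) else ‖p‖ ^ n.natAbs) := by
        apply Summable.tsum_le_tsum _ hhn hvs.1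
        intro n
        by_cases h0 : n = 0
        · subst h0
          simp only [hh, hg, if_pos rfl, if_true]
          split <;> simp
        · by_cases hbn : n = b
          · subst hbn
            simp only [hh, if_pos rfl, norm_zero, if_neg h0]
            positivity
          · simp only [hh, hg, if_neg h0, if_neg hbn]
            exact hbound n h0 hbn
    _ = 2 * ‖p‖ / (1 - ‖p‖) := hvs.2

lemma natAbs_le_sq {n : ℤ} (hn : n ≠ 0) : (n.natAbs : ℤ) ≤ n^2 := by
  rcases Int.natAbs_eq n with h | h
  · nlinarith [Int.natAbs_pos.mpr hn, h]
  · nlinarith [Int.natAbs_pos.mpr hn, h]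

lemma boundG {P : ℂ} (hP0 : P ≠ 0) (hP1 : ‖P‖ < 1) :
    ∀ n : ℤ, n ≠ 0 → n ≠ 1 → ‖P ^ (n^2) * (-1:ℂ) ^ n‖ ≤ ‖P‖ ^ n.natAbs := by
  intro n hn0 _
  have hρ0 : (0:ℝ) < ‖P‖ := norm_pos_iff.mpr hP0
  rw [norm_mul, norm_zpow, norm_zpow, ← zpow_natCast ‖P‖ n.natAbs]
  rw [show ‖(-1:ℂ)‖ = 1 by simp, one_zpow, mul_one]
  exact zpow_le_zpow_right_of_le_one₀ hρ0 hP1.le (natAbs_le_sq hn0)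

lemma bound1 {P x : ℂ} (hP0 : P ≠ 0) (hx0 : x ≠ 0) (hx1 : ‖x‖ ≤ 1) (hx2 : ‖P‖ < ‖x‖) :
    ∀ n : ℤ, n ≠ 0 → n ≠ -1 → ‖P ^ (n^2) * x ^ n‖ ≤ ‖P‖ ^ n.natAbs := by
  intro n hn0 hn1
  have hρ0 : (0:ℝ) < ‖P‖ := norm_pos_iff.mpr hP0
  have hσ0 : (0:ℝ) < ‖x‖ := norm_pos_iff.mpr hx0
  have hP1 : ‖P‖ ≤ 1 := le_trans hx2.le hx1
  rw [norm_mul, norm_zpow, norm_zpow, ← zpow_natCast ‖P‖ n.natAbs]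
  rcases le_or_gt 1 n with h | h
  · have h1 : ‖x‖ ^ n ≤ 1 := zpow_le_one₀ hσ0 hx1 (by omega)
    calc ‖P‖^(n^2) * ‖x‖^n ≤ ‖P‖^(n^2) * 1 :=
          mul_le_mul_of_nonneg_left h1 (zpow_nonneg hρ0.le _)
      _ = ‖P‖^(n^2) := mul_one _
      _ ≤ ‖P‖^((n.natAbs : ℤ)) :=
          zpow_le_zpow_right_of_le_one₀ hρ0 hP1 (natAbs_le_sq hn0)
  · have hn2 : n ≤ -2 := by omega
    have h1 : ‖x‖ ^ n ≤ ‖P‖ ^ n := by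
      have e1 : (‖x‖/‖P‖) ^ n ≤ 1 :=
        zpow_le_one_of_nonpos₀ ((one_le_div hρ0).mpr hx2.le) (by omega)
      rw [div_zpow] at e1
      exact (div_le_one (zpow_pos hρ0 n)).mp e1
    have hexp : (n.natAbs : ℤ) ≤ n^2 + n := by
      rcases Int.natAbs_eq n with h' | h'
      · omega
      · nlinarith [h']
    calc ‖P‖^(n^2) * ‖x‖^n ≤ ‖P‖^(n^2) * ‖P‖^n :=
          mul_le_mul_of_nonneg_left h1 (zpow_nonneg hρ0.le _)
      _ = ‖P‖^(n^2 + n) := (zpow_add₀ hρ0.ne' _ _).symm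
      _ ≤ ‖P‖^((n.natAbs : ℤ)) := zpow_le_zpow_right_of_le_one₀ hρ0 hP1 hexp

lemma bound2 {P y : ℂ} (hP0 : P ≠ 0) (hy0 : y ≠ 0) (hy1 : 1 ≤ ‖y‖) (hy2 : ‖y‖ * ‖P‖ ≤ 1) :
    ∀ n : ℤ, n ≠ 0 → n ≠ 1 → ‖P ^ (n^2) * y ^ n‖ ≤ ‖P‖ ^ n.natAbs := by
  intro n hn0 hn1
  have hρ0 : (0:ℝ) < ‖P‖ := norm_pos_iff.mpr hP0
  have hP1 : ‖P‖ ≤ 1 := by nlinarith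
  rw [norm_mul, norm_zpow, norm_zpow, ← zpow_natCast ‖P‖ n.natAbs]
  rcases le_or_gt 2 n with h | h
  · have e1 : (‖y‖ * ‖P‖) ^ n ≤ 1 := zpow_le_one₀ (by positivity) hy2 (by omega)
    rw [mul_zpow] at e1
    have h1 : ‖y‖ ^ n ≤ (‖P‖ ^ n)⁻¹ := by
      have hpn : (0:ℝ) < ‖P‖ ^ n := zpow_pos hρ0 n
      calc ‖y‖ ^ n = ‖y‖^n * ‖P‖^n * (‖P‖^n)⁻¹ := by
            rw [mul_assoc, mul_inv_cancel₀ hpn.ne', mul_one]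
        _ ≤ 1 * (‖P‖^n)⁻¹ := by
            apply mul_le_mul_of_nonneg_right e1 (by positivity)
        _ = (‖P‖^n)⁻¹ := one_mul _
    have hexp : (n.natAbs : ℤ) ≤ n^2 - n := by
      rcases Int.natAbs_eq n with h' | h'
      · nlinarith [h']
      · omega
    calc ‖P‖^(n^2) * ‖y‖^n ≤ ‖P‖^(n^2) * (‖P‖^n)⁻¹ :=
          mul_le_mul_of_nonneg_left h1 (zpow_nonneg hρ0.le _)
      _ = ‖P‖^(n^2 - n) := by rw [← zpow_neg, ← zpow_add₀ hρ0.ne']; ring_nf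
      _ ≤ ‖P‖^((n.natAbs : ℤ)) := zpow_le_zpow_right_of_le_one₀ hρ0 hP1 hexp
  · have hn2 : n ≤ -1 := by omega
    have h1 : ‖y‖ ^ n ≤ 1 := zpow_le_one_of_nonpos₀ hy1 (by omega)
    calc ‖P‖^(n^2) * ‖y‖^n ≤ ‖P‖^(n^2) * 1 :=
          mul_le_mul_of_nonneg_left h1 (zpow_nonneg hρ0.le _)
      _ = ‖P‖^(n^2) := mul_one _
      _ ≤ ‖P‖^((n.natAbs : ℤ)) :=
          zpow_le_zpow_right_of_le_one₀ hρ0 hP1 (natAbs_le_sq hn0)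

lemma noDescent (Bad : ℂ → Prop) (ε : ℝ) (hε : 0 < ε)
    (hstep : ∀ P : ℂ, P ≠ 0 → ‖P‖ < 1 → Bad P → Bad (P^2))
    (hsmall : ∀ P : ℂ, P ≠ 0 → ‖P‖ < ε → ¬ Bad P) :
    ∀ P : ℂ, P ≠ 0 → ‖P‖ < 1 → ¬ Bad P := by
  intro P hP0 hP1 hbad
  have chain : ∀ k : ℕ, Bad (P ^ (2^k)) := by
    intro k; induction k with
    | zero => simpa using hbad
    | succ k ih =>
        have h0 : P ^ (2^k) ≠ 0 := pow_ne_zero _ hP0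
        have h1 : ‖P ^ (2^k)‖ < 1 := by
          rw [norm_pow]
          exact pow_lt_one₀ (norm_nonneg P) hP1 (by positivity)
        have := hstep _ h0 h1 ih
        rwa [← pow_mul, ← pow_succ] at this
  obtain ⟨k, hk⟩ := exists_pow_lt_of_lt_one hε hP1
  have hkk : ‖P ^ (2^k)‖ < ε := by
    rw [norm_pow]
    calc ‖P‖^(2^k) ≤ ‖P‖^k :=
          pow_le_pow_of_le_one (norm_nonneg P) hP1.le (Nat.lt_two_pow_self (n := k)).le
      _ < ε := hk
  exact hsmall _ (pow_ne_zero _ hP0) hkk (chain k)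


lemma th_small_neg_one {P : ℂ} (hP0 : P ≠ 0) (hPs : ‖P‖ < 1/4) : Th P (-1) ≠ 0 := by
  intro h0
  have hP1 : ‖P‖ < 1 := by linarith
  have hsum := thSummable hP0 hP1 (by norm_num : (-1:ℂ) ≠ 0)
  have est := th_est hP0 hP1 (by norm_num : (-1:ℂ) ≠ 0) 1 one_ne_zero hsum (boundG hP0 hP1)
  rw [h0] at est
  have e1 : (0:ℂ) - 1 - P ^ ((1:ℤ)^2) * (-1:ℂ)^(1:ℤ) = -(1 - P) := by
    rw [show ((1:ℤ)^2) = 1 by norm_num, zpow_one, zpow_one]; ring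
  rw [e1, norm_neg] at est
  have h2 : (1:ℝ) ≤ ‖(1:ℂ) - P‖ + ‖P‖ := by
    calc (1:ℝ) = ‖(1:ℂ)‖ := by simp
      _ = ‖(1 - P) + P‖ := by rw [sub_add_cancel]
      _ ≤ ‖(1:ℂ) - P‖ + ‖P‖ := norm_add_le _ _
  have hρ : (0:ℝ) ≤ ‖P‖ := norm_nonneg P
  have hlt : 2 * ‖P‖ / (1 - ‖P‖) < 3/4 := by
    rw [div_lt_iff₀ (by linarith)]; linarith
  linarith

lemma th_neg_one_sq {P : ℂ} (hP0 : P ≠ 0) (hP1 : ‖P‖ < 1) (h : Th P (-1) = 0) :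
    Th (P^2) (-1) = 0 := by
  have hstar := th_star hP0 hP1 (one_ne_zero) (fun u hu => thSummableNorm hP0 hP1 hu)
  rw [h, mul_zero] at hstar
  rw [show (-((1:ℂ)^2)) = -1 by norm_num] at hstar
  exact mul_self_eq_zero.mp hstar.symm

lemma th_neg_one_ne_zero {P : ℂ} (hP0 : P ≠ 0) (hP1 : ‖P‖ < 1) : Th P (-1) ≠ 0 :=
  noDescent (fun Q => Th Q (-1) = 0) (1/4) (by norm_num)
    (fun Q h0 h1 h => th_neg_one_sq h0 h1 h)
    (fun Q h0 h1 h => th_small_neg_one h0 h1 h) P hP0 hP1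

lemma th_step2 {p t : ℂ} (hp0 : p ≠ 0) (hp1 : ‖p‖ < 1) (ht : t ≠ 0) (h : Th p t = 0) :
    Th (p^2) (-(t^2)) = 0 := by
  have hstar := th_star hp0 hp1 ht (fun u hu => thSummableNorm hp0 hp1 hu)
  rw [h, zero_mul] at hstar
  have hp20 : (p^2 : ℂ) ≠ 0 := pow_ne_zero _ hp0
  have hp21 : ‖(p^2 : ℂ)‖ < 1 := by
    rw [norm_pow]; exact pow_lt_one₀ (norm_nonneg p) hp1 two_ne_zero
  rcases mul_eq_zero.mp hstar.symm with h' | h'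
  · exact h'
  · exact absurd h' (th_neg_one_ne_zero hp20 hp21)

def BadPair (P : ℂ) : Prop :=
  ∃ x : ℂ, x ≠ 0 ∧ ‖x‖ ≤ 1 ∧ ‖P‖ < ‖x‖ ∧ Th P x = 0 ∧ Th P (P * x) = 0

lemma stepPair {P : ℂ} (hP0 : P ≠ 0) (hP1 : ‖P‖ < 1) (h : BadPair P) : BadPair (P^2) := by
  obtain ⟨x, hx0, hx1, hx2, z1, z2⟩ := h
  refine ⟨-(x^2), by simpa using hx0, ?_, ?_, ?_, ?_⟩
  · rw [norm_neg, norm_pow]; exact pow_le_one₀ (norm_nonneg x) hx1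
  · rw [norm_neg, norm_pow, norm_pow]
    exact pow_lt_pow_left₀ hx2 (norm_nonneg P) two_ne_zero
  · exact th_step2 hP0 hP1 hx0 z1
  · have := th_step2 hP0 hP1 (mul_ne_zero hP0 hx0) z2
    rwa [show -((P*x)^2) = P^2 * -(x^2) by ring] at this

lemma smallPair {P : ℂ} (hP0 : P ≠ 0) (hPs : ‖P‖ < 1/10) : ¬ BadPair P := by
  rintro ⟨x, hx0, hx1, hx2, z1, z2⟩
  have hP1 : ‖P‖ < 1 := by linarith
  have hρ0 : (0:ℝ) < ‖P‖ := norm_pos_iff.mpr hP0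
  have hσ0 : (0:ℝ) < ‖x‖ := norm_pos_iff.mpr hx0
  set M : ℝ := 2 * ‖P‖ / (1 - ‖P‖) with hM
  have est1 := th_est hP0 hP1 hx0 (-1) (by norm_num) (thSummable hP0 hP1 hx0)
    (bound1 hP0 hx0 hx1 hx2)
  rw [z1] at est1
  have e1 : (0:ℂ) - 1 - P ^ (((-1):ℤ)^2) * x^((-1):ℤ) = -(1 + P * x⁻¹) := by
    rw [show (((-1):ℤ)^2) = 1 by norm_num, zpow_one, zpow_neg_one]; ring
  rw [e1, norm_neg] at est1
  have zy : Th P (x * P⁻¹) = 0 := by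
    have := th_zero_shift hP0 (mul_ne_zero hP0 hx0) (-1) z2
    rwa [show P ^ ((2:ℤ) * (-1)) * (P * x) = x * P⁻¹ by
      rw [show (2:ℤ)*(-1) = -(2:ℤ) by ring, zpow_neg, show (2:ℤ) = ((2:ℕ):ℤ) by norm_num,
        zpow_natCast]
      field_simp] at this
  have hy0 : x * P⁻¹ ≠ 0 := mul_ne_zero hx0 (inv_ne_zero hP0)
  have hy1 : 1 ≤ ‖x * P⁻¹‖ := by
    rw [norm_mul, norm_inv, ← div_eq_mul_inv, le_div_iff₀ hρ0, one_mul]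
    exact hx2.le
  have hy2 : ‖x * P⁻¹‖ * ‖P‖ ≤ 1 := by
    rw [norm_mul, norm_inv, mul_assoc, inv_mul_cancel₀ hρ0.ne', mul_one]
    exact hx1
  have est2 := th_est hP0 hP1 hy0 1 one_ne_zero (thSummable hP0 hP1 hy0)
    (bound2 hP0 hy0 hy1 hy2)
  rw [zy] at est2
  have e2 : (0:ℂ) - 1 - P ^ ((1:ℤ)^2) * (x * P⁻¹)^((1):ℤ) = -(1 + x) := by
    rw [show ((1:ℤ)^2) = 1 by norm_num, zpow_one, zpow_one]
    field_simp
    ring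
  rw [e2, norm_neg] at est2
  -- derive the two norm inequalities
  have hxlb : 1 - M ≤ ‖x‖ := by
    have : (1:ℝ) ≤ ‖(1:ℂ) + x‖ + ‖x‖ := by
      calc (1:ℝ) = ‖(1:ℂ)‖ := by simp
        _ = ‖(1 + x) - x‖ := by rw [add_sub_cancel_right]
        _ ≤ ‖(1:ℂ) + x‖ + ‖x‖ := norm_sub_le _ _
    linarith
  have hPxlb : 1 - M ≤ ‖P‖ * ‖x‖⁻¹ := by
    have : (1:ℝ) ≤ ‖(1:ℂ) + P * x⁻¹‖ + ‖P * x⁻¹‖ := by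
      calc (1:ℝ) = ‖(1:ℂ)‖ := by simp
        _ = ‖(1 + P * x⁻¹) - P * x⁻¹‖ := by rw [add_sub_cancel_right]
        _ ≤ ‖(1:ℂ) + P * x⁻¹‖ + ‖P * x⁻¹‖ := norm_sub_le _ _
    rw [norm_mul, norm_inv] at this
    linarith
  have hq' : (1 - M) * ‖x‖ ≤ ‖P‖ := by
    calc (1-M)*‖x‖ ≤ (‖P‖*‖x‖⁻¹)*‖x‖ := mul_le_mul_of_nonneg_right hPxlb hσ0.le
      _ = ‖P‖ := by rw [mul_assoc, inv_mul_cancel₀ hσ0.ne', mul_one]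
  have hMlt : M < 2/9 := by
    rw [hM, div_lt_iff₀ (by linarith)]; linarith
  nlinarith [mul_le_mul hxlb hxlb (by linarith) hσ0.le]

lemma noBadPair {P : ℂ} (hP0 : P ≠ 0) (hP1 : ‖P‖ < 1) : ¬ BadPair P :=
  noDescent BadPair (1/10) (by norm_num) (fun Q h0 h1 => stepPair h0 h1)
    (fun Q h0 h1 => smallPair h0 h1) P hP0 hP1

lemma Bpoint {r s : ℂ} (hr0 : r ≠ 0) (hs0 : s ≠ 0) (l : ℤ) :
    r ^ ((2*l+1)^2) * s ^ (2*l+1) = (r*s) * ((r^4) ^ (l^2) * ((r^4)*(s^2))^l) := by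
  have h4 : (r^4 : ℂ) = r^((4:ℕ):ℤ) := (zpow_natCast r 4).symm
  have h2 : (s^2 : ℂ) = s^((2:ℕ):ℤ) := (zpow_natCast s 2).symm
  rw [mul_zpow, h4, h2, ← zpow_mul, ← zpow_mul, ← zpow_mul]
  push_cast
  rw [show (2*l+1)^2 = 4*l^2 + (4*l + 1) by ring, zpow_add₀ hr0, zpow_add₀ hr0, zpow_one,
    zpow_add₀ hs0, zpow_one]
  ring

end ThetaNCZ

/-- The theta series `Θ₀(w) = ∑_{l∈ℤ} q^{l²} w^l` and
`Θ_{1/2}(w) = ∑_{l∈ℤ} q^{(l+1/2)²} w^{l+1/2} = ∑_{l∈ℤ} r^{(2l+1)²} s^{2l+1}`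
(where `r⁴ = q` and `s² = w` fix the branches) have no common zero. -/
theorem theta_no_common_zero (q : ℂ) (hq0 : 0 < ‖q‖) (hq1 : ‖q‖ < 1)
    (w : ℂ) (hw : w ≠ 0) (r s : ℂ) (hr : r ^ 4 = q) (hs : s ^ 2 = w) :
    ¬((∑' l : ℤ, q ^ (l ^ 2) * w ^ l) = 0 ∧
      (∑' l : ℤ, r ^ ((2 * l + 1) ^ 2) * s ^ (2 * l + 1)) = 0) := by
  rintro ⟨hA, hB⟩
  have hq0' : q ≠ 0 := by
    intro h; rw [h] at hq0; simp at hq0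
  have hq1' : ‖q‖ < 1 := by exact hq1
  have hr0 : r ≠ 0 := by intro h; apply hq0'; rw [← hr, h]; ring
  have hs0 : s ≠ 0 := by intro h; apply hw; rw [← hs, h]; ring
  have hThA : Th q w = 0 := hA
  have hBeq : (∑' l : ℤ, r ^ ((2*l+1)^2) * s ^ (2*l+1)) = (r*s) * Th q (q*w) := by
    rw [Th, ← tsum_mul_left]
    refine tsum_congr fun l => ?_
    rw [← hr, ← hs]
    exact Bpoint hr0 hs0 l
  have hThB : Th q (q*w) = 0 := by
    rw [hBeq] at hB
    rcases mul_eq_zero.mp hB with h | h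
    · exact absurd h (mul_ne_zero hr0 hs0)
    · exact h
  have hwpos : (0:ℝ) < ‖w‖ := norm_pos_iff.mpr hw
  have hqpos : (0:ℝ) < ‖q‖ := norm_pos_iff.mpr hq0'
  obtain ⟨n, hn1, hn2⟩ := exists_mem_Ioc_zpow (x := ‖w‖) (y := ‖q‖⁻¹) hwpos
    ((one_lt_inv₀ hqpos).mpr hq1')
  rw [inv_zpow, ← zpow_neg] at hn1
  rw [inv_zpow, ← zpow_neg] at hn2
  set x : ℂ := q^(n+1) * w with hxdef
  have hx0' : x ≠ 0 := mul_ne_zero (zpow_ne_zero _ hq0') hw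
  have hxnorm : ‖x‖ = ‖q‖^(n+1) * ‖w‖ := by rw [hxdef, norm_mul, norm_zpow]
  have hqz : (0:ℝ) < ‖q‖^(n+1) := zpow_pos hqpos _
  have hx_le : ‖x‖ ≤ 1 := by
    rw [hxnorm]
    calc ‖q‖^(n+1) * ‖w‖ ≤ ‖q‖^(n+1) * ‖q‖^(-(n+1)) :=
          mul_le_mul_of_nonneg_left hn2 hqz.le
      _ = 1 := by rw [← zpow_add₀ hqpos.ne', add_neg_cancel, zpow_zero]
  have hx_gt : ‖q‖ < ‖x‖ := by
    rw [hxnorm]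
    calc ‖q‖ = ‖q‖^(n+1) * ‖q‖^(-n) := by
          rw [← zpow_add₀ hqpos.ne', show n+1+(-n) = 1 by ring, zpow_one]
      _ < ‖q‖^(n+1) * ‖w‖ := mul_lt_mul_of_pos_left hn1 hqz
  have zx : Th q x = 0 := th_zero_orbit hq0' hw hThA hThB (n+1)
  have zqx : Th q (q*x) = 0 := by
    have := th_zero_orbit hq0' hw hThA hThB (n+2)
    rwa [show q^(n+2)*w = q*(q^(n+1)*w) by
      rw [show n+2 = 1+(n+1) by ring, zpow_add₀ hq0', zpow_one, mul_assoc]] at this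
  exact noBadPair hq0' hq1' ⟨x, hx0', hx_le, hx_gt, zx, zqx⟩
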